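/- Let G be a connected finite simple graph with n vertices and minimum degree δ. Then for every real number p with 0 ≤ p ≤ 1, γ_r(G) ≤ 2np + 2n·e^{-p(δ+1)}. -/

import Mathlib

/-!
Probabilistic method. Put each vertex into `A` independently with probability `p`; let `B` be
the vertices with no vertex of `A` in their closed neighbourhood (`undominated`), and `C` the
vertices outside `A ∪ B` all of whose neighbours lie in `A ∪ B` (`enclosed`). Then `A ∪ B ∪ C`
is a restrained dominating set. A vertex lies in `A` with probability `p` and in `B` with
probability `(1 - p) ^ (deg v + 1) ≤ (1 - p) ^ (δ + 1)`; a vertex with a neighbour `u` lies in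
`C` only if `u ∈ A ∪ B`, and an isolated vertex never lies in `C`. So the expected size is at
most `n (2p + 2(1 - p) ^ (δ + 1))`, some choice of `A` does at least as well, and
`1 - p ≤ e ^ (-p)`.
-/

/-- A set `D` is a restrained dominating set of `G` if every vertex not in `D`
is adjacent to a vertex in `D` and to a vertex outside `D`. -/
def IsRestrainedDominatingSet {V : Type*} (G : SimpleGraph V) (D : Finset V) : Prop :=
  (∀ v, v ∉ D → ∃ u ∈ D, G.Adj v u) ∧ (∀ v, v ∉ D → ∃ u, u ∉ D ∧ G.Adj v u)

/-- The restrained domination number: minimum cardinality of a restrained dominating set. -/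
noncomputable def restrainedDominationNumber {V : Type*} [Fintype V] (G : SimpleGraph V) : ℕ :=
  sInf {n | ∃ D : Finset V, IsRestrainedDominatingSet G D ∧ D.card = n}

open Finset

section BernoulliSubset

variable {V : Type*} [Fintype V] (p : ℝ)

/-- The probability of drawing `A` when each vertex is chosen independently with probability `p`;
`bernoulliProb p E` is then the probability of the event `E`. -/
noncomputable def bernoulliWeight (A : Finset V) : ℝ :=
  p ^ #A * (1 - p) ^ (Fintype.card V - #A)

open Classical in
noncomputable def bernoulliProb (E : Finset V → Prop) : ℝ :=
  ∑ A with E A, bernoulliWeight p A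

variable {p}

lemma bernoulliProb_eq (E : Finset V → Prop) [DecidablePred E] :
    bernoulliProb p E = ∑ A with E A, bernoulliWeight p A := by
  unfold bernoulliProb
  congr

lemma bernoulliWeight_nonneg (hp0 : 0 ≤ p) (hp1 : p ≤ 1) (A : Finset V) :
    0 ≤ bernoulliWeight p A :=
  mul_nonneg (pow_nonneg hp0 _) (pow_nonneg (sub_nonneg.mpr hp1) _)

variable (p) in
lemma sum_bernoulliWeight : ∑ A : Finset V, bernoulliWeight p A = 1 := by
  simp [bernoulliWeight, Fintype.sum_pow_mul_eq_add_pow]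

lemma bernoulliProb_mono (hp0 : 0 ≤ p) (hp1 : p ≤ 1) {E F : Finset V → Prop}
    (h : ∀ A, E A → F A) : bernoulliProb p E ≤ bernoulliProb p F := by
  classical
  refine sum_le_sum_of_subset_of_nonneg (monotone_filter_right _ fun A _ ↦ h A) ?_
  exact fun A _ _ ↦ bernoulliWeight_nonneg hp0 hp1 A

lemma bernoulliProb_or_le (hp0 : 0 ≤ p) (hp1 : p ≤ 1) (E F : Finset V → Prop) :
    bernoulliProb p (fun A ↦ E A ∨ F A) ≤ bernoulliProb p E + bernoulliProb p F := by
  classical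
  simp only [bernoulliProb_eq]
  rw [filter_or, ← sum_union_inter]
  exact le_add_of_nonneg_right (sum_nonneg fun A _ ↦ bernoulliWeight_nonneg hp0 hp1 A)

lemma bernoulliProb_add_bernoulliProb_not (E : Finset V → Prop) :
    bernoulliProb p E + bernoulliProb p (fun A ↦ ¬ E A) = 1 := by
  classical
  simp only [bernoulliProb_eq]
  rw [sum_filter_add_sum_filter_not, sum_bernoulliWeight]

variable (p) in
lemma bernoulliProb_disjoint (T : Finset V) :
    bernoulliProb p (fun A ↦ Disjoint A T) = (1 - p) ^ #T := by
  classical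
  have hfilter : ({A | Disjoint A T} : Finset (Finset V)) = Tᶜ.powerset := by
    ext A; simp [subset_compl_iff_disjoint_right]
  have hweight : ∀ A ∈ Tᶜ.powerset,
      bernoulliWeight p A = p ^ #A * (1 - p) ^ (#Tᶜ - #A) * (1 - p) ^ #T := by
    intro A hA
    have := card_le_card (mem_powerset.mp hA)
    rw [bernoulliWeight, mul_assoc, ← pow_add, card_compl] at *
    congr 2
    have := card_le_univ T
    omega
  rw [bernoulliProb_eq, hfilter, sum_congr rfl hweight, ← sum_mul, sum_pow_mul_eq_add_pow]
  simp

variable (p) in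
lemma bernoulliProb_mem (v : V) : bernoulliProb p (v ∈ ·) = p := by
  have h := bernoulliProb_add_bernoulliProb_not (p := p) (fun A ↦ Disjoint A {v})
  rw [bernoulliProb_disjoint, card_singleton, pow_one] at h
  simp only [disjoint_singleton_right, not_not] at h
  linarith

lemma exists_le_sum_bernoulliWeight_mul (hp0 : 0 ≤ p) (hp1 : p ≤ 1) (f : Finset V → ℝ) :
    ∃ A, f A ≤ ∑ B, bernoulliWeight p B * f B := by
  obtain ⟨A, -, hA⟩ := exists_min_image univ f univ_nonempty
  refine ⟨A, ?_⟩
  calc f A = ∑ B, bernoulliWeight p B * f A := by rw [← sum_mul, sum_bernoulliWeight, one_mul]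
    _ ≤ ∑ B, bernoulliWeight p B * f B :=
      sum_le_sum fun B _ ↦ mul_le_mul_of_nonneg_left (hA B (mem_univ B))
        (bernoulliWeight_nonneg hp0 hp1 B)

variable (p) in
lemma sum_bernoulliWeight_mul_card (X : Finset V → Finset V) :
    ∑ A, bernoulliWeight p A * #(X A) = ∑ v, bernoulliProb p (fun A ↦ v ∈ X A) := by
  classical
  simp only [bernoulliProb_eq, sum_filter]
  rw [sum_comm]
  refine sum_congr rfl fun A _ ↦ ?_
  rw [← sum_filter, filter_univ_mem, sum_const, nsmul_eq_mul, mul_comm]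

end BernoulliSubset

section RestrainedExtension

variable {V : Type*} [Fintype V] [DecidableEq V] (G : SimpleGraph V) [DecidableRel G.Adj]

def undominated (A : Finset V) : Finset V :=
  {v | Disjoint A (insert v (G.neighborFinset v))}

def enclosed (A : Finset V) : Finset V :=
  {v | v ∉ A ∪ undominated G A ∧ ∀ u ∈ G.neighborFinset v, u ∈ A ∪ undominated G A}

def restrainedExtension (A : Finset V) : Finset V :=
  A ∪ undominated G A ∪ enclosed G A

variable {G} in
lemma mem_undominated {A : Finset V} {v : V} :
    v ∈ undominated G A ↔ Disjoint A (insert v (G.neighborFinset v)) := by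
  simp [undominated]

variable {G} in
lemma mem_enclosed {A : Finset V} {v : V} :
    v ∈ enclosed G A ↔
      v ∉ A ∪ undominated G A ∧ ∀ u ∈ G.neighborFinset v, u ∈ A ∪ undominated G A := by
  simp [enclosed]

lemma isRestrainedDominatingSet_restrainedExtension (A : Finset V) :
    IsRestrainedDominatingSet G (restrainedExtension G A) := by
  constructor
  · intro v hv
    simp only [restrainedExtension, mem_union, not_or] at hv
    obtain ⟨u, huA, hu⟩ := not_disjoint_iff.mp (mem_undominated.not.mp hv.1.2)
    refine ⟨u, mem_union_left _ (mem_union_left _ huA), ?_⟩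
    rcases mem_insert.mp hu with rfl | hu
    · exact absurd huA hv.1.1
    · exact (G.mem_neighborFinset v u).mp hu
  · intro v hv
    rw [restrainedExtension, mem_union, not_or] at hv
    obtain ⟨hvAB, hvC⟩ := hv
    obtain ⟨u, hu, huAB⟩ : ∃ u ∈ G.neighborFinset v, u ∉ A ∪ undominated G A := by
      simpa [mem_enclosed, hvAB] using hvC
    have hadj := (G.mem_neighborFinset v u).mp hu
    have huC : u ∉ enclosed G A := fun huC ↦
      hvAB (mem_enclosed.mp huC |>.2 v ((G.mem_neighborFinset u v).mpr hadj.symm))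
    exact ⟨u, by simp only [restrainedExtension, mem_union, not_or] at huAB ⊢; tauto, hadj⟩

variable {p : ℝ}

lemma bernoulliProb_mem_undominated_le (hp0 : 0 ≤ p) (hp1 : p ≤ 1) (v : V) :
    bernoulliProb p (fun A ↦ v ∈ undominated G A) ≤ (1 - p) ^ (G.minDegree + 1) := by
  simp only [mem_undominated, bernoulliProb_disjoint,
    card_insert_of_notMem (G.notMem_neighborFinset_self v),
    SimpleGraph.card_neighborFinset_eq_degree]
  exact pow_le_pow_of_le_one (by linarith) (by linarith) (by simp [G.minDegree_le_degree v])

lemma exists_forall_mem_enclosed_imp (v : V) :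
    ∃ u, ∀ A, v ∈ enclosed G A → u ∈ A ∪ undominated G A := by
  by_cases h : ∃ u, G.Adj v u
  · obtain ⟨u, hu⟩ := h
    exact ⟨u, fun A hv ↦ (mem_enclosed.mp hv).2 u ((G.mem_neighborFinset v u).mpr hu)⟩
  · have hN : G.neighborFinset v = ∅ := by
      ext u
      simpa using fun hu ↦ h ⟨u, hu⟩
    refine ⟨v, fun A _ ↦ ?_⟩
    rw [mem_union, mem_undominated, hN, insert_empty, disjoint_singleton_right]
    exact em _

lemma bernoulliProb_mem_enclosed_le (hp0 : 0 ≤ p) (hp1 : p ≤ 1) (v : V) :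
    bernoulliProb p (fun A ↦ v ∈ enclosed G A) ≤ p + (1 - p) ^ (G.minDegree + 1) := by
  obtain ⟨u, hu⟩ := exists_forall_mem_enclosed_imp G v
  calc bernoulliProb p (fun A ↦ v ∈ enclosed G A)
      ≤ bernoulliProb p (fun A ↦ u ∈ A ∨ u ∈ undominated G A) :=
        bernoulliProb_mono hp0 hp1 fun A hA ↦ mem_union.mp (hu A hA)
    _ ≤ bernoulliProb p (u ∈ ·) + bernoulliProb p (fun A ↦ u ∈ undominated G A) :=
        bernoulliProb_or_le hp0 hp1 _ _
    _ ≤ p + (1 - p) ^ (G.minDegree + 1) := by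
        rw [bernoulliProb_mem]
        exact add_le_add le_rfl (bernoulliProb_mem_undominated_le G hp0 hp1 u)

lemma bernoulliProb_mem_restrainedExtension_le (hp0 : 0 ≤ p) (hp1 : p ≤ 1) (v : V) :
    bernoulliProb p (fun A ↦ v ∈ restrainedExtension G A) ≤
      2 * p + 2 * (1 - p) ^ (G.minDegree + 1) := by
  have hA := bernoulliProb_mem p v
  have hB := bernoulliProb_mem_undominated_le G hp0 hp1 v
  have hC := bernoulliProb_mem_enclosed_le G hp0 hp1 v
  have hAB := bernoulliProb_or_le hp0 hp1 (v ∈ ·) (fun A ↦ v ∈ undominated G A)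
  have hABC := bernoulliProb_or_le hp0 hp1 (fun A ↦ v ∈ A ∨ v ∈ undominated G A)
    (fun A ↦ v ∈ enclosed G A)
  simp only [restrainedExtension, mem_union]
  linarith

lemma exists_card_restrainedExtension_le (hp0 : 0 ≤ p) (hp1 : p ≤ 1) :
    ∃ A, (#(restrainedExtension G A) : ℝ) ≤
      Fintype.card V * (2 * p + 2 * (1 - p) ^ (G.minDegree + 1)) := by
  obtain ⟨A, hA⟩ := exists_le_sum_bernoulliWeight_mul hp0 hp1
    (fun A ↦ (#(restrainedExtension G A) : ℝ))
  refine ⟨A, hA.trans ?_⟩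
  rw [sum_bernoulliWeight_mul_card, ← nsmul_eq_mul, ← card_univ, ← sum_const]
  exact sum_le_sum fun v _ ↦ bernoulliProb_mem_restrainedExtension_le G hp0 hp1 v

end RestrainedExtension

lemma restrainedDominationNumber_le_card {V : Type*} [Fintype V] {G : SimpleGraph V}
    {D : Finset V} (hD : IsRestrainedDominatingSet G D) : restrainedDominationNumber G ≤ #D :=
  Nat.sInf_le ⟨D, hD, rfl⟩

lemma one_sub_pow_le_exp_neg_mul {p : ℝ} (hp1 : p ≤ 1) (k : ℕ) :
    (1 - p) ^ k ≤ Real.exp (-(p * k)) := by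
  rw [show -(p * k) = k * -p by ring, Real.exp_nat_mul]
  exact pow_le_pow_left₀ (by linarith) (by linarith [Real.add_one_le_exp (-p)]) k

theorem stmt_16_general {V : Type*} [Fintype V] (G : SimpleGraph V) [DecidableRel G.Adj]
    (n : ℕ) (hn : n = Fintype.card V)
    (δ : ℕ) (hδ : δ = G.minDegree) :
    ∀ p : ℝ, 0 ≤ p → p ≤ 1 →
      (restrainedDominationNumber G : ℝ) ≤
        2 * n * p + 2 * n * Real.exp (-(p * (δ + 1))) := by
  classical
  intro p hp0 hp1
  obtain ⟨A, hA⟩ := exists_card_restrainedExtension_le G hp0 hp1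
  calc (restrainedDominationNumber G : ℝ) ≤ #(restrainedExtension G A) := by
        exact_mod_cast restrainedDominationNumber_le_card
          (isRestrainedDominatingSet_restrainedExtension G A)
    _ ≤ n * (2 * p + 2 * (1 - p) ^ (δ + 1)) := by rwa [hn, hδ]
    _ ≤ n * (2 * p + 2 * Real.exp (-(p * (δ + 1)))) := by
        gcongr
        exact_mod_cast one_sub_pow_le_exp_neg_mul hp1 (δ + 1)
    _ = 2 * n * p + 2 * n * Real.exp (-(p * (δ + 1))) := by ring

/-- For a connected graph `G` with `n` vertices and minimum degree `δ`, for every real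
`p` with `0 ≤ p ≤ 1`, `γ_r(G) ≤ 2np + 2n·e^{-p(δ+1)}`. -/
theorem stmt_16 {V : Type*} [Fintype V] (G : SimpleGraph V) [DecidableRel G.Adj]
    (hconn : G.Connected) (n : ℕ) (hn : n = Fintype.card V)
    (δ : ℕ) (hδ : δ = G.minDegree) :
    ∀ p : ℝ, 0 ≤ p → p ≤ 1 →
      (restrainedDominationNumber G : ℝ) ≤
        2 * n * p + 2 * n * Real.exp (-(p * (δ + 1))) :=
  stmt_16_general G n hn δ hδ
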